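/- Let G be a group acting on a set X and let K ⊆ X be finite with every element of K having infinite G-orbit. Then for every n there exist g_0, …, g_n ∈ G such that the sets g_0·K, …, g_n·K are pairwise disjoint. -/

import Mathlib

/-!
By B. H. Neumann's lemma, a group covered by finitely many left cosets has one of the subgroups
of finite index. If every translate `g • K` met the finite set `E`, then `G` would be covered by
the transporters `{g | g • k = e}` with `k ∈ K`, `e ∈ E`, each a left coset of the stabilizer of
`k`; a stabilizer of finite index means a finite orbit. So some translate of `K` avoids any given
finite set, and choosing each new translate to avoid the union of the previous ones yields a
sequence of pairwise disjoint translates.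
-/

open Set Pointwise Function

namespace MulAction

variable {G X : Type*} [Group G] [MulAction G X]

theorem orbit_finite_of_finiteIndex_stabilizer {x : X} [(stabilizer G x).FiniteIndex] :
    (orbit G x).Finite :=
  Set.finite_of_ncard_ne_zero (index_stabilizer G x ▸ Subgroup.FiniteIndex.index_ne_zero)

theorem smul_eq_smul_iff_mem_leftCoset_stabilizer {g₀ g : G} {x : X} :
    g • x = g₀ • x ↔ g ∈ g₀ • (stabilizer G x : Set G) := by
  rw [mem_leftCoset_iff, SetLike.mem_coe, mem_stabilizer_iff, mul_smul, inv_smul_eq_iff]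

theorem exists_smul_image_disjoint {K E : Set X} (hK : K.Finite) (hE : E.Finite)
    (horb : ∀ k ∈ K, (orbit G k).Infinite) : ∃ g : G, Disjoint ((g • ·) '' K) E := by
  classical
  by_contra! hmeet
  set s := (hK.prod hE).toFinset.filter fun p => p.2 ∈ orbit G p.1
  choose! g₀ hg₀ using fun p (hp : p ∈ s) => mem_orbit_iff.1 (Finset.mem_filter.1 hp).2
  have hcover : ⋃ p ∈ s, g₀ p • (stabilizer G p.1 : Set G) = univ := by
    refine eq_univ_of_forall fun g => ?_
    obtain ⟨_, ⟨k, hk, rfl⟩, he⟩ := not_disjoint_iff.1 (hmeet g)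
    have hp : (k, g • k) ∈ s := by simp [s, hk, he, mem_orbit]
    exact mem_biUnion hp (smul_eq_smul_iff_mem_leftCoset_stabilizer.1 (hg₀ _ hp).symm)
  obtain ⟨p, hp, hfin⟩ := Subgroup.exists_finiteIndex_of_leftCoset_cover hcover
  have hpK : p.1 ∈ K := ((hK.prod hE).mem_toFinset.1 (Finset.mem_filter.1 hp).1).1
  exact horb p.1 hpK orbit_finite_of_finiteIndex_stabilizer

theorem exists_seq_pairwise_disjoint_smul_image {K : Set X} (hK : K.Finite)
    (horb : ∀ k ∈ K, (orbit G k).Infinite) :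
    ∃ g : ℕ → G, Pairwise (Disjoint on fun n => (g n • ·) '' K) := by
  obtain ⟨g, -, hg⟩ := exists_seq_of_forall_finset_exists' (fun _ => True)
    (Disjoint on fun a : G => (a • ·) '' K) fun s _ => by
      obtain ⟨b, hb⟩ := exists_smul_image_disjoint hK
        (s.finite_toSet.biUnion fun a _ => hK.image (a • ·)) horb
      exact ⟨b, trivial, fun a ha => (hb.mono_right (subset_biUnion_of_mem ha)).symm⟩
  exact ⟨g, hg⟩

end MulAction

theorem pairwise_disjoint_translates {G X : Type*} [Group G] [MulAction G X]
    (K : Set X) (hK : K.Finite) (horb : ∀ k ∈ K, (MulAction.orbit G k).Infinite)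
    (n : ℕ) :
    ∃ g : Fin (n + 1) → G, ∀ i j : Fin (n + 1), i ≠ j →
      Disjoint ((g i • ·) '' K) ((g j • ·) '' K) := by
  obtain ⟨g, hg⟩ := MulAction.exists_seq_pairwise_disjoint_smul_image hK horb
  exact ⟨fun i => g i, fun i j hij => hg (Fin.val_injective.ne hij)⟩
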